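/- Let ψ_k : ℝ^d → ℝ (k = 1,…,n_g) be continuously differentiable, H a symmetric n_g × n_g real matrix, Δt > 0 and N ∈ ℕ. Given sequences u^n ∈ (ℝ^d)^{n_g}, P^n ∈ (ℝ^d)^{n_p} (n = 0,…,N) and Q^n ∈ (ℝ^d)^{n_p} (n = −1,…,N), define the discrete action 𝒜_d = Δt Σ_{n=0}^{N} [ ½ Σ_{k,l} u^n_k·H_{kl} u^n_l + Σ_β P^n_β·( (Q^n_β − Q^{n-1}_β)/Δt − Σ_k u^n_k ψ_k(Q^{n-1}_β) ) ]. Then 𝒜_d is stationary with respect to all variations of the interior variables u^n, P^n (0 ≤ n ≤ N) and Q^n (0 ≤ n ≤ N−1) if and only if the following hold: (1) Σ_l H_{kl} u^n_l = Σ_β P^n_β ψ_k(Q^{n-1}_β) for all k and 0 ≤ n ≤ N; (2) Q^{n}_β = Q^{n-1}_β + Δt Σ_k u^{n}_k ψ_k(Q^{n-1}_β) for all β and 0 ≤ n ≤ N; (3) P^{n+1}_β = P^n_β − Δt Σ_k ( P^{n+1}_β·u^{n+1}_k ) ∇ψ_k(Q^n_β) for all β and 0 ≤ n ≤ N−1.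 -/

import Mathlib

/-- Gradient of a scalar function on `ℝ^d`, as the vector of partial derivatives. -/
noncomputable def grad {d : ℕ} (f : (Fin d → ℝ) → ℝ) (x : Fin d → ℝ) : Fin d → ℝ :=
  fun i => fderiv ℝ f x (Pi.single i 1)

/-- Euclidean dot product on `ℝ^d`. -/
noncomputable def dot {d : ℕ} (x y : Fin d → ℝ) : ℝ := ∑ i, x i * y i

section Aux
variable {d : ℕ}
lemma dot_comm' (x y : Fin d → ℝ) : dot x y = dot y x := by simp [dot, mul_comm]
lemma dot_add_right' (x y z : Fin d → ℝ) : dot x (y + z) = dot x y + dot x z := by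
  simp [dot, mul_add, Finset.sum_add_distrib]
lemma dot_sub_right' (x y z : Fin d → ℝ) : dot x (y - z) = dot x y - dot x z := by
  simp [dot, mul_sub, Finset.sum_sub_distrib]
lemma dot_smul_right' (c : ℝ) (x y : Fin d → ℝ) : dot x (c • y) = c * dot x y := by
  simp only [dot, Pi.smul_apply, smul_eq_mul, Finset.mul_sum]
  exact Finset.sum_congr rfl fun i _ => by ring
lemma dot_sum_right' {ι : Type*} (s : Finset ι) (x : Fin d → ℝ) (f : ι → Fin d → ℝ) :
    dot x (∑ i ∈ s, f i) = ∑ i ∈ s, dot x (f i) := by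
  simp only [dot, Finset.sum_apply, Finset.mul_sum]
  exact Finset.sum_comm
lemma dot_zero_right' (x : Fin d → ℝ) : dot x 0 = 0 := by simp [dot]
lemma dot_zero_left' (x : Fin d → ℝ) : dot 0 x = 0 := by simp [dot]
end Aux
section Aux2
variable {d : ℕ}
lemma dot_single_left' (i : Fin d) (x : Fin d → ℝ) : dot (Pi.single i 1) x = x i := by
  simp [dot, Pi.single_apply, ite_mul]

lemma fderiv_apply_eq_dot (f : (Fin d → ℝ) → ℝ) (x v : Fin d → ℝ) :
    fderiv ℝ f x v = dot v (grad f x) := by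
  have hv : v = ∑ i, v i • (Pi.single i 1 : Fin d → ℝ) := by
    funext j
    simp [Pi.single_apply, Finset.sum_apply, ite_mul]
  conv_lhs => rw [hv]
  rw [map_sum]
  simp [grad, dot, map_smul]

lemma hasDerivAt_dot' {f g : ℝ → Fin d → ℝ} {f' g' : Fin d → ℝ} {t : ℝ}
    (hf : HasDerivAt f f' t) (hg : HasDerivAt g g' t) :
    HasDerivAt (fun s => dot (f s) (g s)) (dot f' (g t) + dot (f t) g') t := by
  have : HasDerivAt (fun s => ∑ i, f s i * g s i)
      (∑ i, (f' i * g t i + f t i * g' i)) t :=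
    HasDerivAt.fun_sum fun i _ => (hasDerivAt_pi.1 hf i).mul (hasDerivAt_pi.1 hg i)
  simpa [dot, Finset.sum_add_distrib] using this

lemma hasDerivAt_path (x v : Fin d → ℝ) : HasDerivAt (fun ε : ℝ => x + ε • v) v 0 := by
  simpa using ((hasDerivAt_id (0:ℝ)).smul_const v).const_add x

lemma hasDerivAt_psi (f : (Fin d → ℝ) → ℝ) (hf : ContDiff ℝ 1 f) (x v : Fin d → ℝ) :
    HasDerivAt (fun ε : ℝ => f (x + ε • v)) (dot v (grad f x)) 0 := by
  have h2 : HasFDerivAt f (fderiv ℝ f x) ((fun ε : ℝ => x + ε • v) 0) := by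
    simpa using ((hf.differentiable one_ne_zero) x).hasFDerivAt
  have := h2.comp_hasDerivAt 0 (hasDerivAt_path x v)
  simpa [fderiv_apply_eq_dot, Function.comp_def] using this
end Aux2

variable {d ng np N : ℕ}
lemma key1 (ψ : Fin ng → (Fin d → ℝ) → ℝ) (hψ : ∀ k, ContDiff ℝ 1 (ψ k))
    (H : Matrix (Fin ng) (Fin ng) ℝ) (Δt : ℝ)
    (u δu : ℕ → Fin ng → Fin d → ℝ) (P Q δP δQ : ℕ → Fin np → Fin d → ℝ) :
    HasDerivAt (fun ε : ℝ => Δt * ∑ n ∈ Finset.range (N + 1),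
      ((1/2) * ∑ k, ∑ l, H k l * dot (u n k + ε • δu n k) (u n l + ε • δu n l)
        + ∑ β, dot (P n β + ε • δP n β)
            (Δt⁻¹ • (Q (n + 1) β + ε • δQ (n + 1) β - (Q n β + ε • δQ n β))
              - ∑ k, ψ k (Q n β + ε • δQ n β) • (u n k + ε • δu n k))))
      (Δt * ∑ n ∈ Finset.range (N + 1),
        ((1/2) * ∑ k, ∑ l, H k l * (dot (δu n k) (u n l) + dot (u n k) (δu n l))
          + ∑ β, (dot (δP n β) (Δt⁻¹ • (Q (n + 1) β - Q n β) - ∑ k, ψ k (Q n β) • u n k)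
              + dot (P n β) (Δt⁻¹ • (δQ (n + 1) β - δQ n β)
                  - ∑ k, (dot (δQ n β) (grad (ψ k) (Q n β)) • u n k
                      + ψ k (Q n β) • δu n k))))) 0 := by
  apply HasDerivAt.const_mul
  apply HasDerivAt.fun_sum
  intro n _
  apply HasDerivAt.add
  · apply HasDerivAt.const_mul
    apply HasDerivAt.fun_sum; intro k _
    apply HasDerivAt.fun_sum; intro l _
    have := (hasDerivAt_dot' (hasDerivAt_path (u n k) (δu n k))
      (hasDerivAt_path (u n l) (δu n l))).const_mul (H k l)
    simpa using this
  · apply HasDerivAt.fun_sum; intro β _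
    have hg : HasDerivAt (fun ε : ℝ =>
        Δt⁻¹ • (Q (n + 1) β + ε • δQ (n + 1) β - (Q n β + ε • δQ n β))
          - ∑ k, ψ k (Q n β + ε • δQ n β) • (u n k + ε • δu n k))
        (Δt⁻¹ • (δQ (n + 1) β - δQ n β)
          - ∑ k, (dot (δQ n β) (grad (ψ k) (Q n β)) • u n k + ψ k (Q n β) • δu n k)) 0 := by
      apply HasDerivAt.sub
      · exact ((hasDerivAt_path (Q (n+1) β) (δQ (n+1) β)).sub
          (hasDerivAt_path (Q n β) (δQ n β))).const_smul Δt⁻¹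
      · apply HasDerivAt.fun_sum; intro k _
        have := (hasDerivAt_psi (ψ k) (hψ k) (Q n β) (δQ n β)).fun_smul
          (hasDerivAt_path (u n k) (δu n k))
        simpa [add_comm] using this
    have := hasDerivAt_dot' (hasDerivAt_path (P n β) (δP n β)) hg
    simpa using this

lemma key2 (ψ : Fin ng → (Fin d → ℝ) → ℝ)
    (H : Matrix (Fin ng) (Fin ng) ℝ) (hH : H.IsSymm) (Δt : ℝ)
    (u δu : ℕ → Fin ng → Fin d → ℝ) (P Q δP δQ : ℕ → Fin np → Fin d → ℝ)
    (hQ0 : δQ 0 = 0) (hQN : δQ (N + 1) = 0) :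
    (∑ n ∈ Finset.range (N + 1),
        ((1/2) * ∑ k, ∑ l, H k l * (dot (δu n k) (u n l) + dot (u n k) (δu n l))
          + ∑ β, (dot (δP n β) (Δt⁻¹ • (Q (n + 1) β - Q n β) - ∑ k, ψ k (Q n β) • u n k)
              + dot (P n β) (Δt⁻¹ • (δQ (n + 1) β - δQ n β)
                  - ∑ k, (dot (δQ n β) (grad (ψ k) (Q n β)) • u n k
                      + ψ k (Q n β) • δu n k)))))
    = (∑ n ∈ Finset.range (N + 1), ∑ k,
          dot (δu n k) (∑ l, H k l • u n l - ∑ β, ψ k (Q n β) • P n β))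
      + (∑ n ∈ Finset.range (N + 1), ∑ β,
          dot (δP n β) (Δt⁻¹ • (Q (n + 1) β - Q n β) - ∑ k, ψ k (Q n β) • u n k))
      + (∑ m ∈ Finset.range (N + 1), ∑ β,
          dot (δQ m β) (Δt⁻¹ • (P (m - 1) β - P m β)
            - ∑ k, dot (P m β) (u m k) • grad (ψ k) (Q m β))) := by
  have hA : ∀ n, (1/2 : ℝ) * ∑ k, ∑ l, H k l * (dot (δu n k) (u n l) + dot (u n k) (δu n l))
      = ∑ k, ∑ l, H k l * dot (δu n k) (u n l) := by
    intro n
    have hswap : ∑ k, ∑ l, H k l * dot (u n k) (δu n l)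
        = ∑ k, ∑ l, H k l * dot (δu n k) (u n l) := by
      rw [Finset.sum_comm]
      refine Finset.sum_congr rfl fun k _ => Finset.sum_congr rfl fun l _ => ?_
      rw [hH.apply k l, dot_comm']
    have hsplit : ∑ k, ∑ l, H k l * (dot (δu n k) (u n l) + dot (u n k) (δu n l))
        = (∑ k, ∑ l, H k l * dot (δu n k) (u n l))
          + ∑ k, ∑ l, H k l * dot (u n k) (δu n l) := by
      simp [mul_add, Finset.sum_add_distrib]
    rw [hsplit, hswap]; ring
  have hPW : ∀ n β, dot (P n β) (Δt⁻¹ • (δQ (n + 1) β - δQ n β)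
        - ∑ k, (dot (δQ n β) (grad (ψ k) (Q n β)) • u n k + ψ k (Q n β) • δu n k))
      = Δt⁻¹ * dot (P n β) (δQ (n + 1) β) - Δt⁻¹ * dot (P n β) (δQ n β)
        - ∑ k, dot (δQ n β) (grad (ψ k) (Q n β)) * dot (P n β) (u n k)
        - ∑ k, ψ k (Q n β) * dot (P n β) (δu n k) := by
    intro n β
    rw [dot_sub_right', dot_smul_right', dot_sub_right', dot_sum_right']
    simp only [dot_add_right', dot_smul_right', Finset.sum_add_distrib]
    ring
  have hDUA : ∀ n, ∑ k, dot (δu n k) (∑ l, H k l • u n l - ∑ β, ψ k (Q n β) • P n β)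
      = (∑ k, ∑ l, H k l * dot (δu n k) (u n l))
        - ∑ k, ∑ β, ψ k (Q n β) * dot (δu n k) (P n β) := by
    intro n
    simp only [dot_sub_right', dot_sum_right', dot_smul_right', Finset.sum_sub_distrib]
  have hC : ∀ (m : ℕ) (β : Fin np), dot (δQ m β) (Δt⁻¹ • (P (m - 1) β - P m β)
        - ∑ k, dot (P m β) (u m k) • grad (ψ k) (Q m β))
      = Δt⁻¹ * dot (δQ m β) (P (m - 1) β) - Δt⁻¹ * dot (δQ m β) (P m β)
        - ∑ k, dot (P m β) (u m k) * dot (δQ m β) (grad (ψ k) (Q m β)) := by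
    intro m β
    rw [dot_sub_right', dot_smul_right', dot_sub_right', dot_sum_right']
    simp only [dot_smul_right']
    ring
  have hshift : ∀ β, ∑ n ∈ Finset.range (N + 1), Δt⁻¹ * dot (P n β) (δQ (n + 1) β)
      = ∑ m ∈ Finset.range (N + 1), Δt⁻¹ * dot (δQ m β) (P (m - 1) β) := by
    intro β
    have h0 : δQ 0 β = 0 := by rw [hQ0]; rfl
    have hN : δQ (N + 1) β = 0 := by rw [hQN]; rfl
    have e1 : ∑ m ∈ Finset.range (N + 2), Δt⁻¹ * dot (δQ m β) (P (m - 1) β)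
        = (∑ i ∈ Finset.range (N + 1), Δt⁻¹ * dot (δQ (i + 1) β) (P i β)) := by
      rw [Finset.sum_range_succ' (fun m => Δt⁻¹ * dot (δQ m β) (P (m - 1) β)) (N + 1)]
      simp [h0, dot_zero_left']
    have e2 : ∑ m ∈ Finset.range (N + 2), Δt⁻¹ * dot (δQ m β) (P (m - 1) β)
        = ∑ m ∈ Finset.range (N + 1), Δt⁻¹ * dot (δQ m β) (P (m - 1) β) := by
      rw [Finset.sum_range_succ]
      simp [hN, dot_zero_left']
    calc ∑ n ∈ Finset.range (N + 1), Δt⁻¹ * dot (P n β) (δQ (n + 1) β)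
        = ∑ i ∈ Finset.range (N + 1), Δt⁻¹ * dot (δQ (i + 1) β) (P i β) := by
          refine Finset.sum_congr rfl fun n _ => ?_; rw [dot_comm']
      _ = ∑ m ∈ Finset.range (N + 2), Δt⁻¹ * dot (δQ m β) (P (m - 1) β) := e1.symm
      _ = _ := e2
  -- now assemble
  simp only [hA, hPW, hDUA, hC]
  simp only [Finset.sum_add_distrib, Finset.sum_sub_distrib]
  have hψswap : ∑ n ∈ Finset.range (N + 1), ∑ β, ∑ k, ψ k (Q n β) * dot (P n β) (δu n k)
      = ∑ n ∈ Finset.range (N + 1), ∑ k, ∑ β, ψ k (Q n β) * dot (δu n k) (P n β) := by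
    refine Finset.sum_congr rfl fun n _ => ?_
    rw [Finset.sum_comm]
    exact Finset.sum_congr rfl fun k _ => Finset.sum_congr rfl fun β _ => by rw [dot_comm']
  have h3a : ∑ n ∈ Finset.range (N + 1), ∑ β, Δt⁻¹ * dot (P n β) (δQ (n + 1) β)
      = ∑ m ∈ Finset.range (N + 1), ∑ β, Δt⁻¹ * dot (δQ m β) (P (m - 1) β) := by
    calc ∑ n ∈ Finset.range (N + 1), ∑ β, Δt⁻¹ * dot (P n β) (δQ (n + 1) β)
        = ∑ β, ∑ n ∈ Finset.range (N + 1), Δt⁻¹ * dot (P n β) (δQ (n + 1) β) :=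
          Finset.sum_comm
      _ = ∑ β, ∑ m ∈ Finset.range (N + 1), Δt⁻¹ * dot (δQ m β) (P (m - 1) β) :=
          Finset.sum_congr rfl fun β _ => hshift β
      _ = _ := Finset.sum_comm
  have h3b : ∑ n ∈ Finset.range (N + 1), ∑ β, Δt⁻¹ * dot (P n β) (δQ n β)
      = ∑ n ∈ Finset.range (N + 1), ∑ β, Δt⁻¹ * dot (δQ n β) (P n β) :=
    Finset.sum_congr rfl fun n _ => Finset.sum_congr rfl fun β _ => by rw [dot_comm']
  have h3c : ∑ n ∈ Finset.range (N + 1), ∑ β, ∑ k,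
        dot (δQ n β) (grad (ψ k) (Q n β)) * dot (P n β) (u n k)
      = ∑ n ∈ Finset.range (N + 1), ∑ β, ∑ k,
        dot (P n β) (u n k) * dot (δQ n β) (grad (ψ k) (Q n β)) :=
    Finset.sum_congr rfl fun n _ => Finset.sum_congr rfl fun β _ =>
      Finset.sum_congr rfl fun k _ => by ring
  rw [hψswap, h3a, h3b, h3c]
  ring



/-- The discrete VPM action
`𝒜_d = Δt Σ_{n=0}^{N} [ ½ Σ_{k,l} u^n_k·H_{kl} u^n_l
  + Σ_β P^n_β·( (Q^n_β − Q^{n-1}_β)/Δt − Σ_k u^n_k ψ_k(Q^{n-1}_β) ) ]`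
is stationary with respect to all variations of the interior variables `u^n, P^n`
(`0 ≤ n ≤ N`) and `Q^n` (`0 ≤ n ≤ N−1`) if and only if the first-order symplectic
Euler-A scheme (1)–(3) holds.

Here `Q n` denotes `Q^{n-1}`, so that `Q 0 = Q^{-1}` and `Q (N+1) = Q^N` are the fixed
boundary values, and the interior positions are `Q m` for `1 ≤ m ≤ N`. -/
theorem stmt10 (d ng np : ℕ)
    (ψ : Fin ng → (Fin d → ℝ) → ℝ) (hψ : ∀ k, ContDiff ℝ 1 (ψ k))
    (H : Matrix (Fin ng) (Fin ng) ℝ) (hH : H.IsSymm)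
    (Δt : ℝ) (hΔt : 0 < Δt) (N : ℕ)
    (u : ℕ → Fin ng → Fin d → ℝ) (P : ℕ → Fin np → Fin d → ℝ)
    (Q : ℕ → Fin np → Fin d → ℝ)
    (Ad : (ℕ → Fin ng → Fin d → ℝ) → (ℕ → Fin np → Fin d → ℝ) →
      (ℕ → Fin np → Fin d → ℝ) → ℝ)
    (hAd : ∀ u' P' Q', Ad u' P' Q' = Δt * ∑ n ∈ Finset.range (N + 1),
      ((1/2) * ∑ k, ∑ l, H k l * dot (u' n k) (u' n l)
        + ∑ β, dot (P' n β)
            (Δt⁻¹ • (Q' (n + 1) β - Q' n β) - ∑ k, ψ k (Q' n β) • u' n k))) :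
    (∀ (δu : ℕ → Fin ng → Fin d → ℝ) (δP δQ : ℕ → Fin np → Fin d → ℝ),
        δQ 0 = 0 → δQ (N + 1) = 0 →
        deriv (fun ε : ℝ => Ad (fun n => u n + ε • δu n) (fun n => P n + ε • δP n)
          (fun n => Q n + ε • δQ n)) 0 = 0)
      ↔ ((∀ k, ∀ n ≤ N, ∑ l, H k l • u n l = ∑ β, ψ k (Q n β) • P n β)
        ∧ (∀ β, ∀ n ≤ N, Q (n + 1) β = Q n β + Δt • ∑ k, ψ k (Q n β) • u n k)
        ∧ (∀ β, ∀ n < N, P (n + 1) β = P n β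
            - Δt • ∑ k, dot (P (n + 1) β) (u (n + 1) k) • grad (ψ k) (Q (n + 1) β))) := by
  have hne : Δt ≠ 0 := ne_of_gt hΔt
  have hderiv : ∀ (δu : ℕ → Fin ng → Fin d → ℝ) (δP δQ : ℕ → Fin np → Fin d → ℝ),
      δQ 0 = 0 → δQ (N + 1) = 0 →
      deriv (fun ε : ℝ => Ad (fun n => u n + ε • δu n) (fun n => P n + ε • δP n)
        (fun n => Q n + ε • δQ n)) 0
      = Δt * ((∑ n ∈ Finset.range (N + 1), ∑ k,
            dot (δu n k) (∑ l, H k l • u n l - ∑ β, ψ k (Q n β) • P n β))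
          + (∑ n ∈ Finset.range (N + 1), ∑ β,
            dot (δP n β) (Δt⁻¹ • (Q (n + 1) β - Q n β) - ∑ k, ψ k (Q n β) • u n k))
          + (∑ m ∈ Finset.range (N + 1), ∑ β,
            dot (δQ m β) (Δt⁻¹ • (P (m - 1) β - P m β)
              - ∑ k, dot (P m β) (u m k) • grad (ψ k) (Q m β)))) := by
    intro δu δP δQ hb0 hbN
    have hfun : (fun ε : ℝ => Ad (fun n => u n + ε • δu n) (fun n => P n + ε • δP n)
        (fun n => Q n + ε • δQ n))
        = (fun ε : ℝ => Δt * ∑ n ∈ Finset.range (N + 1),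
            ((1/2) * ∑ k, ∑ l, H k l * dot (u n k + ε • δu n k) (u n l + ε • δu n l)
              + ∑ β, dot (P n β + ε • δP n β)
                  (Δt⁻¹ • (Q (n + 1) β + ε • δQ (n + 1) β - (Q n β + ε • δQ n β))
                    - ∑ k, ψ k (Q n β + ε • δQ n β) • (u n k + ε • δu n k)))) := by
      funext ε
      rw [hAd]
      simp only [Pi.add_apply, Pi.smul_apply]
    rw [hfun, (key1 ψ hψ H Δt u δu P Q δP δQ).deriv]
    exact congrArg (fun x => Δt * x) (key2 ψ H hH Δt u δu P Q δP δQ hb0 hbN)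
  constructor
  · intro h
    refine ⟨?_, ?_, ?_⟩
    · -- condition (1)
      intro k0 n0 hn0
      have key : ∀ i0 : Fin d,
          (∑ l, H k0 l • u n0 l - ∑ β, ψ k0 (Q n0 β) • P n0 β) i0 = 0 := by
        intro i0
        set δu : ℕ → Fin ng → Fin d → ℝ :=
          fun n k => if n = n0 ∧ k = k0 then Pi.single i0 1 else 0 with hδu
        have h0 := h δu 0 0 rfl rfl
        rw [hderiv δu 0 0 rfl rfl] at h0
        simp only [Pi.zero_apply, dot_zero_left', Finset.sum_const_zero, add_zero] at h0
        have e1 : ∑ n ∈ Finset.range (N + 1), ∑ k,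
            dot (δu n k) (∑ l, H k l • u n l - ∑ β, ψ k (Q n β) • P n β)
            = dot (Pi.single i0 1) (∑ l, H k0 l • u n0 l - ∑ β, ψ k0 (Q n0 β) • P n0 β) := by
          rw [Finset.sum_eq_single n0]
          · rw [Finset.sum_eq_single k0]
            · simp [hδu]
            · intro k _ hk; simp [hδu, hk, dot_zero_left']
            · intro hk; exact absurd (Finset.mem_univ k0) hk
          · intro n _ hn
            exact Finset.sum_eq_zero fun k _ => by simp [hδu, hn, dot_zero_left']
          · intro hn
            exact absurd (Finset.mem_range.mpr (Nat.lt_succ_of_le hn0)) hn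
        rw [e1] at h0
        have := (mul_eq_zero.mp h0).resolve_left hne
        rwa [dot_single_left'] at this
      have hvec : (∑ l, H k0 l • u n0 l - ∑ β, ψ k0 (Q n0 β) • P n0 β) = 0 :=
        funext fun i0 => key i0
      exact sub_eq_zero.mp hvec
    · -- condition (2)
      intro β0 n0 hn0
      have key : ∀ i0 : Fin d,
          (Δt⁻¹ • (Q (n0 + 1) β0 - Q n0 β0) - ∑ k, ψ k (Q n0 β0) • u n0 k) i0 = 0 := by
        intro i0
        set δP : ℕ → Fin np → Fin d → ℝ :=
          fun n β => if n = n0 ∧ β = β0 then Pi.single i0 1 else 0 with hδP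
        have h0 := h 0 δP 0 rfl rfl
        rw [hderiv 0 δP 0 rfl rfl] at h0
        simp only [Pi.zero_apply, dot_zero_left', Finset.sum_const_zero, add_zero,
          zero_add] at h0
        have e1 : ∑ n ∈ Finset.range (N + 1), ∑ β,
            dot (δP n β) (Δt⁻¹ • (Q (n + 1) β - Q n β) - ∑ k, ψ k (Q n β) • u n k)
            = dot (Pi.single i0 1)
                (Δt⁻¹ • (Q (n0 + 1) β0 - Q n0 β0) - ∑ k, ψ k (Q n0 β0) • u n0 k) := by
          rw [Finset.sum_eq_single n0]
          · rw [Finset.sum_eq_single β0]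
            · simp [hδP]
            · intro β _ hβ; simp [hδP, hβ, dot_zero_left']
            · intro hβ; exact absurd (Finset.mem_univ β0) hβ
          · intro n _ hn
            exact Finset.sum_eq_zero fun β _ => by simp [hδP, hn, dot_zero_left']
          · intro hn
            exact absurd (Finset.mem_range.mpr (Nat.lt_succ_of_le hn0)) hn
        rw [e1] at h0
        have := (mul_eq_zero.mp h0).resolve_left hne
        rwa [dot_single_left'] at this
      have hvec : Δt⁻¹ • (Q (n0 + 1) β0 - Q n0 β0) - ∑ k, ψ k (Q n0 β0) • u n0 k = 0 :=
        funext fun i0 => key i0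
      have hv2 : Δt⁻¹ • (Q (n0 + 1) β0 - Q n0 β0) = ∑ k, ψ k (Q n0 β0) • u n0 k :=
        sub_eq_zero.mp hvec
      have hv3 : Q (n0 + 1) β0 - Q n0 β0 = Δt • ∑ k, ψ k (Q n0 β0) • u n0 k := by
        have := congrArg (fun x => Δt • x) hv2
        simpa [smul_smul, mul_inv_cancel₀ hne] using this
      rw [← hv3]; abel
    · -- condition (3)
      intro β0 n0 hn0
      have key : ∀ i0 : Fin d,
          (Δt⁻¹ • (P n0 β0 - P (n0 + 1) β0)
            - ∑ k, dot (P (n0 + 1) β0) (u (n0 + 1) k) • grad (ψ k) (Q (n0 + 1) β0)) i0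
            = 0 := by
        intro i0
        set δQ : ℕ → Fin np → Fin d → ℝ :=
          fun m β => if m = n0 + 1 ∧ β = β0 then Pi.single i0 1 else 0 with hδQ
        have hq0 : δQ 0 = 0 :=
          funext fun β => if_neg (fun hc => Nat.succ_ne_zero n0 hc.1.symm)
        have hqN : δQ (N + 1) = 0 :=
          funext fun β => if_neg (fun hc => absurd hc.1 (by omega))
        have h0 := h 0 0 δQ hq0 hqN
        rw [hderiv 0 0 δQ hq0 hqN] at h0
        simp only [Pi.zero_apply, dot_zero_left', Finset.sum_const_zero, add_zero,
          zero_add] at h0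
        have e1 : ∑ m ∈ Finset.range (N + 1), ∑ β,
            dot (δQ m β) (Δt⁻¹ • (P (m - 1) β - P m β)
              - ∑ k, dot (P m β) (u m k) • grad (ψ k) (Q m β))
            = dot (Pi.single i0 1) (Δt⁻¹ • (P n0 β0 - P (n0 + 1) β0)
              - ∑ k, dot (P (n0 + 1) β0) (u (n0 + 1) k) • grad (ψ k) (Q (n0 + 1) β0)) := by
          rw [Finset.sum_eq_single (n0 + 1)]
          · rw [Finset.sum_eq_single β0]
            · simp [hδQ]
            · intro β _ hβ; simp [hδQ, hβ, dot_zero_left']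
            · intro hβ; exact absurd (Finset.mem_univ β0) hβ
          · intro m _ hm
            exact Finset.sum_eq_zero fun β _ => by simp [hδQ, hm, dot_zero_left']
          · intro hm
            exact absurd (Finset.mem_range.mpr (by omega)) hm
        rw [e1] at h0
        have := (mul_eq_zero.mp h0).resolve_left hne
        rwa [dot_single_left'] at this
      have hvec : Δt⁻¹ • (P n0 β0 - P (n0 + 1) β0)
          - ∑ k, dot (P (n0 + 1) β0) (u (n0 + 1) k) • grad (ψ k) (Q (n0 + 1) β0) = 0 :=
        funext fun i0 => key i0
      have hv2 : Δt⁻¹ • (P n0 β0 - P (n0 + 1) β0)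
          = ∑ k, dot (P (n0 + 1) β0) (u (n0 + 1) k) • grad (ψ k) (Q (n0 + 1) β0) :=
        sub_eq_zero.mp hvec
      have hv3 : P n0 β0 - P (n0 + 1) β0
          = Δt • ∑ k, dot (P (n0 + 1) β0) (u (n0 + 1) k) • grad (ψ k) (Q (n0 + 1) β0) := by
        have := congrArg (fun x => Δt • x) hv2
        simpa [smul_smul, mul_inv_cancel₀ hne] using this
      rw [← hv3]; abel
  · rintro ⟨h1, h2, h3⟩ δu δP δQ hb0 hbN
    rw [hderiv δu δP δQ hb0 hbN]
    have hS1 : (∑ n ∈ Finset.range (N + 1), ∑ k,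
        dot (δu n k) (∑ l, H k l • u n l - ∑ β, ψ k (Q n β) • P n β)) = 0 := by
      refine Finset.sum_eq_zero fun n hn => Finset.sum_eq_zero fun k _ => ?_
      rw [h1 k n (Nat.lt_succ_iff.mp (Finset.mem_range.mp hn))]
      simp [dot_zero_right']
    have hS2 : (∑ n ∈ Finset.range (N + 1), ∑ β,
        dot (δP n β) (Δt⁻¹ • (Q (n + 1) β - Q n β) - ∑ k, ψ k (Q n β) • u n k)) = 0 := by
      refine Finset.sum_eq_zero fun n hn => Finset.sum_eq_zero fun β _ => ?_
      rw [h2 β n (Nat.lt_succ_iff.mp (Finset.mem_range.mp hn))]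
      simp [add_sub_cancel_left, smul_smul, inv_mul_cancel₀ hne, dot_zero_right']
    have hS3 : (∑ m ∈ Finset.range (N + 1), ∑ β,
        dot (δQ m β) (Δt⁻¹ • (P (m - 1) β - P m β)
          - ∑ k, dot (P m β) (u m k) • grad (ψ k) (Q m β))) = 0 := by
      refine Finset.sum_eq_zero fun m hm => Finset.sum_eq_zero fun β _ => ?_
      cases m with
      | zero =>
        rw [hb0]
        simp [dot_zero_left']
      | succ j =>
        have hj : j < N := by
          have := Finset.mem_range.mp hm; omega
        have hd : P j β - P (j + 1) β
            = Δt • ∑ k, dot (P (j + 1) β) (u (j + 1) k) • grad (ψ k) (Q (j + 1) β) := by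
          conv_lhs => rw [h3 β j hj]
          exact sub_sub_cancel _ _
        rw [Nat.add_sub_cancel, hd]
        simp only [smul_smul, inv_mul_cancel₀ hne, one_smul, sub_self, dot_zero_right']
    rw [hS1, hS2, hS3]
    ring
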